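/- Let k ≥ 1 and let w be a word as in the block structure above (concatenation of blocks b·1⋯k·d^{e}·k⋯1, ending with b·1⋯k·d^{e}, e ≥ 1 at the end). Suppose M is a non-crossing perfect matching on the positions of w. Then M contains a matched pair of adjacent positions whose letters form one of the unordered pairs {b,1}, {i,i+1} (1 ≤ i ≤ k−1), {k,d}, {d,d}, or {k,k}. -/

import Mathlib

/-!
A non-crossing perfect matching of a nonempty linearly ordered set has an arc joining two
neighbours: an arc `(a, f a)` of minimal length cannot enclose a point, since the arc through
`a + 1` would then be nested inside it and shorter. And any two neighbouring letters of a block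
word form an allowed pair.
-/

/-- The alphabet `{b, d} ∪ {1, …, k}`: two extra symbols plus `Fin k`. -/
abbrev Alph (k : ℕ) := Sum (Fin 2) (Fin k)

/-- The letter `b`. -/
def bS {k : ℕ} : Alph k := Sum.inl 0

/-- The letter `d`. -/
def dS {k : ℕ} : Alph k := Sum.inl 1

/-- The ascending run `1·2⋯k`. -/
def ascL (k : ℕ) : List (Alph k) := (List.finRange k).map Sum.inr

/-- An intermediate block `b·1·2⋯k·d^e·k⋯2·1`. -/
def blockL (k e : ℕ) : List (Alph k) :=
  bS :: (ascL k ++ List.replicate e dS ++ (ascL k).reverse)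

/-- The final block `b·1·2⋯k·d^e`. -/
def lastBlockL (k e : ℕ) : List (Alph k) :=
  bS :: (ascL k ++ List.replicate e dS)

/-- The block word: intermediate blocks with `d`-run lengths given by `es`,
followed by a final block with `d`-run length `e`. -/
def blockWord (k : ℕ) (es : List ℕ) (e : ℕ) : List (Alph k) :=
  (es.map (blockL k)).flatten ++ lastBlockL k e

/-- The allowed unordered pairs of letters:
`{b,1}`, `{i,i+1}`, `{k,d}`, `{d,d}`, `{k,k}`. -/
def AllowedPair (k : ℕ) (x y : Alph k) : Prop :=
  (∃ i : Fin k, (i : ℕ) = 0 ∧ ({x, y} : Set (Alph k)) = {bS, Sum.inr i}) ∨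
  (∃ i j : Fin k, (j : ℕ) = (i : ℕ) + 1 ∧
    ({x, y} : Set (Alph k)) = {Sum.inr i, Sum.inr j}) ∨
  (∃ i : Fin k, (i : ℕ) = k - 1 ∧ ({x, y} : Set (Alph k)) = {Sum.inr i, dS}) ∨
  (x = dS ∧ y = dS) ∨
  (∃ i : Fin k, (i : ℕ) = k - 1 ∧ x = Sum.inr i ∧ y = Sum.inr i)

/-- A matching on linearly ordered positions is non-crossing. -/
def NoncrossL {n : ℕ} (f : Fin n → Fin n) : Prop :=
  ¬ ∃ a b : Fin n, a < b ∧ b < f a ∧ f a < f b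

namespace NoncrossL

variable {n : ℕ} {f : Fin n → Fin n}

theorem apply_mem_Ioo (hinv : Function.Involutive f) (hnc : NoncrossL f) {a b : Fin n}
    (hab : a < b) (hbf : b < f a) : a < f b ∧ f b < f a := by
  constructor
  · by_contra! hfb
    have hfb_ne : f b ≠ a := fun h => by rw [← h, hinv b] at hbf; exact lt_irrefl b hbf
    exact hnc ⟨f b, a, lt_of_le_of_ne hfb hfb_ne, by rwa [hinv], by rwa [hinv]⟩
  · by_contra! hfb
    exact hnc ⟨a, b, hab, hbf, lt_of_le_of_ne hfb (hinv.injective.ne hab.ne)⟩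

theorem exists_apply_eq_succ_of_lt_apply (hinv : Function.Involutive f)
    (hfpf : ∀ x, f x ≠ x) (hnc : NoncrossL f) {a : Fin n} (ha : a < f a) :
    ∃ p : Fin n, (f p : ℕ) = p + 1 := by
  induction a using (measure fun a : Fin n => (f a : ℕ) - a).wf.induction with
  | _ a ih =>
    by_cases hsucc : (f a : ℕ) = a + 1
    · exact ⟨a, hsucc⟩
    obtain ⟨b, hb⟩ : ∃ b : Fin n, (b : ℕ) = a + 1 := ⟨⟨a + 1, by omega⟩, rfl⟩
    obtain ⟨hafb, hfbfa⟩ := apply_mem_Ioo hinv hnc (a := a) (b := b)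
      (Fin.lt_def.2 (by omega)) (Fin.lt_def.2 (by omega))
    have hfb : (f b : ℕ) ≠ b := fun h => hfpf b (Fin.ext h)
    have hbfb : b < f b := by rw [Fin.lt_def] at hafb ⊢; omega
    rw [Fin.lt_def] at hfbfa hbfb
    exact ih b (show (f b : ℕ) - b < (f a : ℕ) - a by omega) hbfb

theorem exists_apply_eq_succ (hinv : Function.Involutive f) (hfpf : ∀ x, f x ≠ x)
    (hnc : NoncrossL f) (a : Fin n) : ∃ p : Fin n, (f p : ℕ) = p + 1 := by
  rcases (hfpf a).lt_or_gt with h | h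
  · exact exists_apply_eq_succ_of_lt_apply hinv hfpf hnc (by rwa [hinv])
  · exact exists_apply_eq_succ_of_lt_apply hinv hfpf hnc h

end NoncrossL

theorem AllowedPair.symm {k : ℕ} {x y : Alph k} (h : AllowedPair k x y) : AllowedPair k y x := by
  rcases h with ⟨i, hi, hs⟩ | ⟨i, j, hij, hs⟩ | ⟨i, hi, hs⟩ | ⟨hx, hy⟩ | ⟨i, hi, hx, hy⟩
  · exact Or.inl ⟨i, hi, Set.pair_comm y x ▸ hs⟩
  · exact Or.inr <| Or.inl ⟨i, j, hij, Set.pair_comm y x ▸ hs⟩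
  · exact Or.inr <| Or.inr <| Or.inl ⟨i, hi, Set.pair_comm y x ▸ hs⟩
  · exact Or.inr <| Or.inr <| Or.inr <| Or.inl ⟨hy, hx⟩
  · exact Or.inr <| Or.inr <| Or.inr <| Or.inr ⟨i, hi, hy, hx⟩

theorem allowedPair_dS_dS (k : ℕ) : AllowedPair k dS dS :=
  Or.inr <| Or.inr <| Or.inr <| Or.inl ⟨rfl, rfl⟩

theorem isChain_ascL (k : ℕ) : (ascL k).IsChain (AllowedPair k) := by
  refine List.isChain_iff_getElem.2 fun i hi => ?_
  rw [ascL, List.length_map, List.length_finRange] at hi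
  exact Or.inr <| Or.inl ⟨⟨i, by omega⟩, ⟨i + 1, hi⟩, rfl, by simp [ascL]⟩

section BlockWord

variable (m : ℕ)

theorem allowedPair_bS_zero : AllowedPair (m + 1) bS (Sum.inr 0) :=
  Or.inl ⟨0, rfl, rfl⟩

theorem allowedPair_last_dS : AllowedPair (m + 1) (Sum.inr (Fin.last m)) dS :=
  Or.inr <| Or.inr <| Or.inl ⟨Fin.last m, by simp, rfl⟩

theorem allowedPair_last_last :
    AllowedPair (m + 1) (Sum.inr (Fin.last m)) (Sum.inr (Fin.last m)) :=
  Or.inr <| Or.inr <| Or.inr <| Or.inr ⟨Fin.last m, by simp, rfl, rfl⟩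

theorem ascL_head? : (ascL (m + 1)).head? = some (Sum.inr 0) := by
  simp [ascL, List.finRange_succ]

theorem ascL_getLast? : (ascL (m + 1)).getLast? = some (Sum.inr (Fin.last m)) := by
  simp [ascL, List.finRange_succ_last]

theorem isChain_ascL_append_replicate (e : ℕ) :
    (ascL (m + 1) ++ List.replicate e dS).IsChain (AllowedPair (m + 1)) := by
  refine List.isChain_append.2 ⟨isChain_ascL _, List.isChain_replicate_of_rel e
    (allowedPair_dS_dS _), fun x hx y hy => ?_⟩
  rw [ascL_getLast?, Option.mem_some_iff] at hx
  rw [List.head?_replicate] at hy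
  obtain ⟨-, rfl⟩ : e ≠ 0 ∧ dS = y := by simpa using hy
  exact hx ▸ allowedPair_last_dS m

theorem isChain_blockL (e : ℕ) : (blockL (m + 1) e).IsChain (AllowedPair (m + 1)) := by
  refine List.isChain_cons.2 ⟨by simp [ascL_head?, allowedPair_bS_zero], ?_⟩
  refine List.isChain_append.2 ⟨isChain_ascL_append_replicate m e,
    List.isChain_reverse.2 ((isChain_ascL _).imp fun _ _ => AllowedPair.symm), ?_⟩
  intro x hx y hy
  rw [List.head?_reverse, ascL_getLast?, Option.mem_some_iff] at hy
  subst hy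
  rcases Nat.eq_zero_or_pos e with rfl | he
  · simp only [List.replicate_zero, List.append_nil, ascL_getLast?, Option.mem_some_iff] at hx
    exact hx ▸ allowedPair_last_last m
  · rw [List.getLast?_append, List.getLast?_replicate] at hx
    obtain rfl : dS = x := by simpa [he.ne'] using hx
    exact (allowedPair_last_dS m).symm

theorem blockL_getLast? (e : ℕ) : (blockL (m + 1) e).getLast? = some (Sum.inr 0) := by
  simp [blockL, List.getLast?_cons, ascL_head?]

theorem blockWord_head? (es : List ℕ) (e : ℕ) : (blockWord (m + 1) es e).head? = some bS := by
  cases es <;> simp [blockWord, blockL, lastBlockL]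

theorem isChain_blockWord (es : List ℕ) (e : ℕ) :
    (blockWord (m + 1) es e).IsChain (AllowedPair (m + 1)) := by
  induction es with
  | nil =>
    refine List.isChain_cons.2 ⟨?_, isChain_ascL_append_replicate m e⟩
    simp [ascL_head?, allowedPair_bS_zero]
  | cons a es ih =>
    rw [show blockWord (m + 1) (a :: es) e = blockL (m + 1) a ++ blockWord (m + 1) es e by
      simp [blockWord]]
    refine List.isChain_append.2 ⟨isChain_blockL m a, ih, fun x hx y hy => ?_⟩
    rw [blockL_getLast?, Option.mem_some_iff] at hx
    rw [blockWord_head?, Option.mem_some_iff] at hy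
    exact hx ▸ hy ▸ (allowedPair_bS_zero m).symm

end BlockWord

theorem blockWord_matching_has_allowed_adjacent_pair_general (k : ℕ) (hk : 1 ≤ k)
    (es : List ℕ) (e : ℕ)
    (f : Fin (blockWord k es e).length → Fin (blockWord k es e).length)
    (hinv : Function.Involutive f) (hfpf : ∀ x, f x ≠ x) (hnc : NoncrossL f) :
    ∃ p : Fin (blockWord k es e).length,
      (f p : ℕ) = (p : ℕ) + 1 ∧
      AllowedPair k ((blockWord k es e).get p) ((blockWord k es e).get (f p)) := by
  obtain ⟨m, rfl⟩ : ∃ m, k = m + 1 := ⟨k - 1, by omega⟩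
  have hlen : 0 < (blockWord (m + 1) es e).length := by simp [blockWord, lastBlockL]
  obtain ⟨p, hp⟩ := hnc.exists_apply_eq_succ hinv hfpf ⟨0, hlen⟩
  have hfp : f p = ⟨p + 1, hp ▸ (f p).isLt⟩ := Fin.ext hp
  refine ⟨p, hp, ?_⟩
  rw [hfp]
  exact List.isChain_iff_getElem.1 (isChain_blockWord m es e) p _

/-- Any non-crossing perfect matching on the positions of a block word contains a
matched pair of adjacent positions whose letters form one of the allowed pairs
`{b,1}`, `{i,i+1}`, `{k,d}`, `{d,d}`, `{k,k}`. -/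
theorem blockWord_matching_has_allowed_adjacent_pair (k : ℕ) (hk : 1 ≤ k)
    (es : List ℕ) (e : ℕ) (he : 1 ≤ e)
    (f : Fin (blockWord k es e).length → Fin (blockWord k es e).length)
    (hinv : Function.Involutive f) (hfpf : ∀ x, f x ≠ x) (hnc : NoncrossL f) :
    ∃ p : Fin (blockWord k es e).length,
      (f p : ℕ) = (p : ℕ) + 1 ∧
      AllowedPair k ((blockWord k es e).get p) ((blockWord k es e).get (f p)) :=
  blockWord_matching_has_allowed_adjacent_pair_general k hk es e f hinv hfpf hnc
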